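/- Let α, β, γ be isotropic subspaces of (V, ω). If (α ∩ (β + γ))^ω = α + β ∩ γ, or (β ∩ (α + γ))^ω = β + α ∩ γ, or (γ ∩ (α + β))^ω = γ + α ∩ β, then α ∩ (β + γ) ∩ (β ∩ (α + γ))^ω = α ∩ β + α ∩ γ (i.e., the kernel of Q(α,β;γ) equals α ∩ β + α ∩ γ). -/
import Mathlib


open Module Submodule

/-- The annihilator of a subspace `lam` with respect to a sesquilinear form `ω`
(linear in the first variable, conjugate-linear in the second). -/
def symplAnn {V : Type*} [AddCommGroup V] [Module ℂ V]
    (ω : V →ₗ[ℂ] V →ₗ⋆[ℂ] ℂ) (lam : Submodule ℂ V) : Submodule ℂ V where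
  carrier := {x | ∀ y ∈ lam, ω x y = 0}
  add_mem' := by
    intro a b ha hb y hy
    simp [ha y hy, hb y hy]
  zero_mem' := by
    intro y hy
    simp
  smul_mem' := by
    intro c x hx y hy
    simp [hx y hy]

lemma mem_symplAnn {V : Type*} [AddCommGroup V] [Module ℂ V]
    (ω : V →ₗ[ℂ] V →ₗ⋆[ℂ] ℂ) (s : Submodule ℂ V) (x : V) :
    x ∈ symplAnn ω s ↔ ∀ y ∈ s, ω x y = 0 := Iff.rfl

theorem stmt5 {V : Type*} [AddCommGroup V] [Module ℂ V]
    (ω : V →ₗ[ℂ] V →ₗ⋆[ℂ] ℂ)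
    (hSkew : ∀ x y : V, ω y x = -(starRingEnd ℂ) (ω x y))
    (hNd : ∀ x : V, (∀ y : V, ω x y = 0) → x = 0)
    (α β γ : Submodule ℂ V)
    (hα : α ≤ symplAnn ω α) (hβ : β ≤ symplAnn ω β) (hγ : γ ≤ symplAnn ω γ)
    (h : symplAnn ω (α ⊓ (β ⊔ γ)) = α ⊔ (β ⊓ γ) ∨
         symplAnn ω (β ⊓ (α ⊔ γ)) = β ⊔ (α ⊓ γ) ∨
         symplAnn ω (γ ⊓ (α ⊔ β)) = γ ⊔ (α ⊓ β)) :
    α ⊓ (β ⊔ γ) ⊓ symplAnn ω (β ⊓ (α ⊔ γ)) = (α ⊓ β) ⊔ (α ⊓ γ) := by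
  have skew0 : ∀ x y : V, ω x y = 0 → ω y x = 0 := by
    intro x y hxy
    rw [hSkew, hxy]
    simp
  apply le_antisymm
  · rintro x ⟨⟨hxα, hxβγ⟩, hxann⟩
    obtain ⟨b, hb, c, hc, hbc⟩ := Submodule.mem_sup.mp hxβγ
    -- b ∈ β ⊓ (α ⊔ γ)
    have hbmem : b ∈ β ⊓ (α ⊔ γ) := by
      refine ⟨hb, ?_⟩
      have : b = x - c := by rw [← hbc]; abel
      rw [this]
      exact Submodule.sub_mem _ (Submodule.mem_sup_left hxα) (Submodule.mem_sup_right hc)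
    have hxb : ω x b = 0 := hxann b hbmem
    have hbb : ω b b = 0 := hβ hb b hb
    have hcb : ω c b = 0 := by
      have : c = x - b := by rw [← hbc]; abel
      rw [this, map_sub, LinearMap.sub_apply, hxb, hbb, sub_zero]
    rcases h with h1 | h2 | h3
    · -- case 1 : (α ∩ (β+γ))^ω = α + β∩γ ; show c ∈ LHS
      have hcann : c ∈ symplAnn ω (α ⊓ (β ⊔ γ)) := by
        rintro y ⟨hyα, hyβγ⟩
        obtain ⟨b', hb', c', hc', hy⟩ := Submodule.mem_sup.mp hyβγ
        have hb'mem : b' ∈ β ⊓ (α ⊔ γ) := by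
          refine ⟨hb', ?_⟩
          have : b' = y - c' := by rw [← hy]; abel
          rw [this]
          exact Submodule.sub_mem _ (Submodule.mem_sup_left hyα) (Submodule.mem_sup_right hc')
        have hxb' : ω x b' = 0 := hxann b' hb'mem
        have hbb' : ω b b' = 0 := hβ hb b' hb'
        have hcb' : ω c b' = 0 := by
          have : c = x - b := by rw [← hbc]; abel
          rw [this, map_sub, LinearMap.sub_apply, hxb', hbb', sub_zero]
        have hcc' : ω c c' = 0 := hγ hc c' hc'
        rw [← hy, map_add, hcb', hcc', add_zero]
      rw [h1] at hcann
      obtain ⟨a₁, ha₁, d₁, hd₁, hcd⟩ := Submodule.mem_sup.mp hcann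
      -- c = a₁ + d₁, a₁ ∈ α, d₁ ∈ β ∩ γ
      have ha₁γ : a₁ ∈ γ := by
        have : a₁ = c - d₁ := by rw [← hcd]; abel
        rw [this]
        exact Submodule.sub_mem _ hc hd₁.2
      have hbd₁α : b + d₁ ∈ α := by
        have : b + d₁ = x - a₁ := by rw [← hbc, ← hcd]; abel
        rw [this]
        exact Submodule.sub_mem _ hxα ha₁
      have : (b + d₁) + a₁ = x := by rw [← hbc, ← hcd]; abel
      exact Submodule.mem_sup.mpr ⟨b + d₁, ⟨hbd₁α, Submodule.add_mem _ hb hd₁.1⟩,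
        a₁, ⟨ha₁, ha₁γ⟩, this⟩
    · -- case 2 : (β ∩ (α+γ))^ω = β + α∩γ
      rw [h2] at hxann
      obtain ⟨b₀, hb₀, d, hd, hbd⟩ := Submodule.mem_sup.mp hxann
      have hb₀α : b₀ ∈ α := by
        have : b₀ = x - d := by rw [← hbd]; abel
        rw [this]
        exact Submodule.sub_mem _ hxα hd.1
      exact Submodule.mem_sup.mpr ⟨b₀, ⟨hb₀α, hb₀⟩, d, hd, hbd⟩
    · -- case 3 : (γ ∩ (α+β))^ω = γ + α∩β
      have hxann3 : x ∈ symplAnn ω (γ ⊓ (α ⊔ β)) := by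
        rintro y ⟨hyγ, hyαβ⟩
        obtain ⟨a', ha', b', hb', hy⟩ := Submodule.mem_sup.mp hyαβ
        have hb'mem : b' ∈ β ⊓ (α ⊔ γ) := by
          refine ⟨hb', ?_⟩
          have : b' = y - a' := by rw [← hy]; abel
          rw [this]
          exact Submodule.sub_mem _ (Submodule.mem_sup_right hyγ) (Submodule.mem_sup_left ha')
        have hxb' : ω x b' = 0 := hxann b' hb'mem
        have h1 : ω a' x = 0 := hα ha' x hxα
        have h2' : ω b' x = 0 := skew0 x b' hxb'
        have hyx : ω y x = 0 := by
          rw [← hy, map_add, LinearMap.add_apply, h1, h2', add_zero]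
        exact skew0 y x hyx
      rw [h3] at hxann3
      obtain ⟨c₀, hc₀, e, he, hce⟩ := Submodule.mem_sup.mp hxann3
      have hc₀α : c₀ ∈ α := by
        have : c₀ = x - e := by rw [← hce]; abel
        rw [this]
        exact Submodule.sub_mem _ hxα he.1
      exact Submodule.mem_sup.mpr ⟨e, he, c₀, ⟨hc₀α, hc₀⟩, by rw [← hce]; abel⟩
  · apply sup_le
    · rintro x ⟨hxα, hxβ⟩
      refine ⟨⟨hxα, Submodule.mem_sup_left hxβ⟩, ?_⟩
      rintro y ⟨hyβ, -⟩
      exact hβ hxβ y hyβ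
    · rintro x ⟨hxα, hxγ⟩
      refine ⟨⟨hxα, Submodule.mem_sup_right hxγ⟩, ?_⟩
      rintro y ⟨hyβ, hyαγ⟩
      obtain ⟨a, ha, c, hc, hy⟩ := Submodule.mem_sup.mp hyαγ
      rw [← hy, map_add, hα hxα a ha, hγ hxγ c hc, add_zero]
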